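/- Let the formation control system be a triangulated formation system induced by a triangulated Laman graph G on n vertices, and let p be a critical point of the potential Φ such that the framework (G,p) is strongly rigid. Then the critical orbit O_p is exponentially stable (the signature of the Hessian H_p is (2n−3, 0, 3)), and moreover ‖x_i − x_j‖ = d̄_{ij} for every edge (i,j) ∈ E. -/

import Mathlib

open scoped BigOperators

noncomputable section

/-- Points in the Euclidean plane. -/
abbrev Pt : Type := EuclideanSpace ℝ (Fin 2)

/-- The flattened space of planar configurations indexed by `ι`
(two real coordinates for each vertex). -/
abbrev Conf (ι : Type*) : Type _ := EuclideanSpace ℝ (ι × Fin 2)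

/-- The position of agent `i` in the configuration `p`. -/
def pt {ι : Type*} (p : Conf ι) (i : ι) : Pt := WithLp.toLp 2 (fun c : Fin 2 => p (i, c))

/-- The sub-configuration of `p` on the vertices in `S`. -/
def restr {ι : Type*} (S : Set ι) (p : Conf ι) : Conf ↥S := WithLp.toLp 2 (fun ic : ↥S × Fin 2 => p ((ic.1 : ι), ic.2))

/-- The configuration space `P_G`: embeddings of the vertex set in the plane for which
adjacent vertices have distinct positions. -/
def configSpace {ι : Type*} (G : SimpleGraph ι) : Set (Conf ι) :=
  {p | ∀ i j : ι, G.Adj i j → pt p i ≠ pt p j}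

/-- A Henneberg sequence for a triangulated Laman graph `G`, encoded by the order
`ord` in which the vertices appear, and for every step `l ≥ 2` the two earlier steps
`par1 l`, `par2 l`, whose (adjacent) vertices the new vertex `ord l` is joined to.
The edges of `G` are exactly the initial edge together with the edges created at
each step. -/
structure Henneberg {ι : Type*} (G : SimpleGraph ι) : Type _ where
  two_le : 2 ≤ Nat.card ι
  ord : Fin (Nat.card ι) ≃ ι
  par1 : Fin (Nat.card ι) → Fin (Nat.card ι)
  par2 : Fin (Nat.card ι) → Fin (Nat.card ι)
  par1_lt : ∀ l : Fin (Nat.card ι), 2 ≤ (l : ℕ) → par1 l < l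
  par2_lt : ∀ l : Fin (Nat.card ι), 2 ≤ (l : ℕ) → par2 l < l
  par_ne : ∀ l : Fin (Nat.card ι), 2 ≤ (l : ℕ) → par1 l ≠ par2 l
  par_adj : ∀ l : Fin (Nat.card ι), 2 ≤ (l : ℕ) → G.Adj (ord (par1 l)) (ord (par2 l))
  edge_iff : ∀ i j : ι, G.Adj i j ↔
    (s(i, j) = s(ord ⟨0, by omega⟩, ord ⟨1, by omega⟩) ∨
      ∃ l : Fin (Nat.card ι), 2 ≤ (l : ℕ) ∧
        (s(i, j) = s(ord (par1 l), ord l) ∨ s(i, j) = s(ord (par2 l), ord l)))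

/-- A graph is a triangulated Laman graph if it is (essentially) a single vertex, or
it can be built by a Henneberg sequence in which each new vertex is joined to the two
endpoints of an existing edge. -/
def IsTriangulatedLaman {ι : Type*} (G : SimpleGraph ι) : Prop :=
  Nat.card ι ≤ 1 ∨ Nonempty (Henneberg G)

open Classical in
/-- The potential `Φ` induced by `G`, with control laws `f i j = u_{ij}(⬝, d̄_{ij})`:
`Φ(p) = Σ_{(i,j) ∈ E} ∫_1^{‖x_i - x_j‖} s u_{ij}(s, d̄_{ij}) ds`
(each edge is counted once; the double sum counts it twice, whence the factor 1/2). -/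
def potential {ι : Type*} [Fintype ι] (G : SimpleGraph ι) (f : ι → ι → ℝ → ℝ)
    (p : Conf ι) : ℝ :=
  (1 / 2) * ∑ i : ι, ∑ j : ι,
    if G.Adj i j then ∫ s in (1 : ℝ)..(dist (pt p i) (pt p j)), s * f i j s else 0

open Classical in
/-- The right-hand side of the formation control system
`ẋ_i = Σ_{j ∈ N_i} u_{ij}(‖x_i - x_j‖, d̄_{ij}) (x_j - x_i)`. -/
def formationField {ι : Type*} [Fintype ι] (G : SimpleGraph ι) (f : ι → ι → ℝ → ℝ)
    (p : Conf ι) : Conf ι :=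
  WithLp.toLp 2 (fun ic : ι × Fin 2 => ∑ j : ι,
    if G.Adj ic.1 j then f ic.1 j (dist (pt p ic.1) (pt p j)) * (p (j, ic.2) - p (ic.1, ic.2))
    else 0)

/-- A monotone attraction/repulsion function: `f` is C¹ on `ℝ_{>0}`,
`d(x f(x))/dx > 0` for `x > 0`, `f` has a unique (positive) zero, and
`∫_x^1 s f(s) ds → -∞` as `x → 0⁺`. -/
structure IsMonoAttRep (f : ℝ → ℝ) : Prop where
  contDiff : ContDiffOn ℝ 1 f (Set.Ioi 0)
  deriv_pos : ∀ x : ℝ, 0 < x → 0 < deriv (fun y => y * f y) x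
  unique_zero : ∃! x : ℝ, 0 < x ∧ f x = 0
  collision : Filter.Tendsto (fun x : ℝ => ∫ s in x..(1 : ℝ), s * f s)
    (nhdsWithin 0 (Set.Ioi 0)) Filter.atBot

/-- 2×2 rotation matrices. -/
def IsRotation (θ : Matrix (Fin 2) (Fin 2) ℝ) : Prop := θ * θ.transpose = 1 ∧ θ.det = 1

/-- The action of `γ = (θ, v) ∈ SE(2)` on configurations: `γ·p = (θ x_1 + v, …, θ x_n + v)`. -/
def se2Act {ι : Type*} (θ : Matrix (Fin 2) (Fin 2) ℝ) (v : Pt) (p : Conf ι) : Conf ι :=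
  WithLp.toLp 2 (fun ic : ι × Fin 2 => θ.mulVec (WithLp.ofLp (pt p ic.1)) ic.2 + v ic.2)

/-- The SE(2)-orbit `O_p` of a configuration `p`. -/
def se2Orbit {ι : Type*} (p : Conf ι) : Set (Conf ι) :=
  {q | ∃ θ v, IsRotation θ ∧ q = se2Act θ v p}

/-- Rotation by 90 degrees. -/
def rotJ : Matrix (Fin 2) (Fin 2) ℝ := !![0, -1; 1, 0]

/-- The infinitesimal rotation of a configuration. -/
def infRot {ι : Type*} (p : Conf ι) : Conf ι := WithLp.toLp 2 (fun ic : ι × Fin 2 => rotJ.mulVec (WithLp.ofLp (pt p ic.1)) ic.2)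

/-- The infinitesimal translation in coordinate direction `c`. -/
def transl (ι : Type*) (c : Fin 2) : Conf ι := WithLp.toLp 2 (fun ic : ι × Fin 2 => if ic.2 = c then 1 else 0)

/-- The tangent space at `p` of the SE(2)-orbit `O_p`. -/
def orbitTangent {ι : Type*} (p : Conf ι) : Submodule ℝ (Conf ι) :=
  Submodule.span ℝ {infRot p, transl ι 0, transl ι 1}

/-- The Hessian matrix `H_p = ∂²Φ(p)/∂p²`. -/
def hessianMat {ι : Type*} [Fintype ι] [DecidableEq ι] (Φ : Conf ι → ℝ) (p : Conf ι) :
    Matrix (ι × Fin 2) (ι × Fin 2) ℝ :=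
  Matrix.of fun a b =>
    iteratedFDeriv ℝ 2 Φ p ![EuclideanSpace.single a 1, EuclideanSpace.single b 1]

/-- The Hessian of `Φ` at `p` with respect to the coordinates of the vertices in `S`
(for `Φ` depending only on those coordinates this is the Hessian of the induced
function of the positions of the vertices in `S`). -/
def hessianMatOn {ι : Type*} [Fintype ι] [DecidableEq ι] (Φ : Conf ι → ℝ) (p : Conf ι) (S : Set ι) :
    Matrix (↥S × Fin 2) (↥S × Fin 2) ℝ :=
  Matrix.of fun a b => hessianMat Φ p ((a.1 : ι), a.2) ((b.1 : ι), b.2)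

open Classical in
/-- `N₊(A)`: the number of positive eigenvalues of a real symmetric matrix,
counted with multiplicity. -/
def nPos {m : Type*} [Finite m] (A : Matrix m m ℝ) : ℕ :=
  letI := Fintype.ofFinite m
  letI := Classical.decEq m
  if h : A.IsHermitian then Fintype.card {i // 0 < h.eigenvalues i} else 0

open Classical in
/-- `N₋(A)`: the number of negative eigenvalues of a real symmetric matrix,
counted with multiplicity. -/
def nNeg {m : Type*} [Finite m] (A : Matrix m m ℝ) : ℕ :=
  letI := Fintype.ofFinite m
  letI := Classical.decEq m
  if h : A.IsHermitian then Fintype.card {i // h.eigenvalues i < 0} else 0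

open Classical in
/-- `N₀(A)`: the number of zero eigenvalues of a real symmetric matrix,
counted with multiplicity. -/
def nZero {m : Type*} [Finite m] (A : Matrix m m ℝ) : ℕ :=
  letI := Fintype.ofFinite m
  letI := Classical.decEq m
  if h : A.IsHermitian then Fintype.card {i // h.eigenvalues i = 0} else 0

/-- `Φ` is an equivariant Morse function on `P_G`: it has finitely many critical orbits,
and each critical orbit is nondegenerate (the Hessian has exactly three zero eigenvalues). -/
def IsEquivariantMorse {ι : Type*} [Fintype ι] [DecidableEq ι] (G : SimpleGraph ι)
    (Φ : Conf ι → ℝ) : Prop :=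
  {O : Set (Conf ι) | ∃ p ∈ configSpace G, gradient Φ p = 0 ∧ O = se2Orbit p}.Finite ∧
  ∀ p ∈ configSpace G, gradient Φ p = 0 → nZero (hessianMat Φ p) = 3

/-- `i`, `j`, `k` form a 3-cycle of `G`. -/
def Is3Cycle {ι : Type*} (G : SimpleGraph ι) (i j k : ι) : Prop :=
  G.Adj i j ∧ G.Adj i k ∧ G.Adj j k

/-- A framework `(G, p)` is strongly rigid if every 3-cycle of `G` is embedded by `p`
as a nondegenerate triangle. -/
def StronglyRigid {ι : Type*} (G : SimpleGraph ι) (p : Conf ι) : Prop :=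
  ∀ i j k : ι, Is3Cycle G i j k →
    LinearIndependent ℝ ![pt p j - pt p i, pt p k - pt p i]

/-- The target distances satisfy the strict triangle inequalities associated with `G`. -/
def StrictTriangleIneqs {ι : Type*} (G : SimpleGraph ι) (dbar : ι → ι → ℝ) : Prop :=
  ∀ i j k : ι, Is3Cycle G i j k →
    dbar j k < dbar i j + dbar i k ∧ dbar i k < dbar i j + dbar j k ∧
      dbar i j < dbar i k + dbar j k

/-- A triangulated formation system: a formation control system induced by a
triangulated Laman graph, with target distances satisfying the strict triangle
inequalities, monotone attraction/repulsion control laws vanishing at the target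
distances, and whose potential is an equivariant Morse function. -/
structure IsTriFormation {ι : Type*} [Fintype ι] [DecidableEq ι] (G : SimpleGraph ι)
    (f : ι → ι → ℝ → ℝ) (dbar : ι → ι → ℝ) : Prop where
  laman : IsTriangulatedLaman G
  fsymm : ∀ i j, f i j = f j i
  dsymm : ∀ i j, dbar i j = dbar j i
  dpos : ∀ i j, G.Adj i j → 0 < dbar i j
  mono : ∀ i j, G.Adj i j → IsMonoAttRep (f i j)
  fzero : ∀ i j, G.Adj i j → f i j (dbar i j) = 0
  triangle : StrictTriangleIneqs G dbar
  morse : IsEquivariantMorse G (potential G f)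

/-- The (critical) orbit of `p` is exponentially stable: the Hessian of `Φ` at `p` has
exactly three zero eigenvalues and no negative eigenvalues (all the others positive). -/
def ExpStableAt {ι : Type*} [Fintype ι] [DecidableEq ι] (Φ : Conf ι → ℝ) (p : Conf ι) : Prop :=
  nZero (hessianMat Φ p) = 3 ∧ nNeg (hessianMat Φ p) = 0

/-- Generating relation for the independent partition: at each step `l ≥ 2` of the
Henneberg sequence in which the new vertex is aligned with its two parents, the two
new edges are related to the parent edge. -/
def triGen {ι : Type*} {G : SimpleGraph ι} (H : Henneberg G) (p : Conf ι) :
    Sym2 ι → Sym2 ι → Prop := fun e e' =>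
  ∃ l : Fin (Nat.card ι), 2 ≤ (l : ℕ) ∧
    Collinear ℝ {pt p (H.ord (H.par1 l)), pt p (H.ord (H.par2 l)), pt p (H.ord l)} ∧
    e' = s(H.ord (H.par1 l), H.ord (H.par2 l)) ∧
    (e = s(H.ord (H.par1 l), H.ord l) ∨ e = s(H.ord (H.par2 l), H.ord l))

/-- The independent partition of the edge set of `G` for the framework `(G, p)`,
computed along the Henneberg sequence `H`. -/
def indepPartition {ι : Type*} {G : SimpleGraph ι} (H : Henneberg G) (p : Conf ι) :
    Set (Set (Sym2 ι)) :=
  {C | ∃ e ∈ G.edgeSet, C = {e' | e' ∈ G.edgeSet ∧ Relation.EqvGen (triGen H p) e e'}}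

/-- The set `V_i` of vertices incident to the edges in a class `C`. -/
def classVerts {ι : Type*} (C : Set (Sym2 ι)) : Set ι := {v | ∃ e ∈ C, v ∈ e}

end

/-!
At a configuration of `P_G` the gradient of `Φ` is `-formationField`, so at a critical point the
weights `u_{ij}(‖x_i - x_j‖)` form an equilibrium stress of the framework. Such a stress vanishes
along a Henneberg sequence: going through the vertices from last to first, the stress on the edges
to later vertices is already zero, so equilibrium at a vertex `l ≥ 2` only involves its two
parents, which by strong rigidity span a nondegenerate triangle with it. Hence every edge sits at
the unique zero of its control law, `‖x_i - x_j‖ = d̄_{ij}`. With all weights zero, the second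
variation of `Φ` in a direction `v` is `½ Σ u_{ij}'(d̄_{ij}) ⟪x_i - x_j, v_i - v_j⟫² / d̄_{ij}`, and
`u_{ij}'(d̄_{ij}) > 0` by (C1); so `H_p` is positive semidefinite, and the Morse hypothesis leaves
exactly three zero eigenvalues.
-/

open Set Topology
open scoped RealInnerProductSpace

section EdgeCalculus

variable {E : Type*} [NormedAddCommGroup E] [InnerProductSpace ℝ E] {u : ℝ → ℝ}

theorem hasFDerivAt_norm_of_ne_zero {a : E} (ha : a ≠ 0) :
    HasFDerivAt (‖·‖) (‖a‖⁻¹ • innerSL ℝ a) a := by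
  have h := (hasStrictFDerivAt_norm_sq a).hasFDerivAt.sqrt (by positivity)
  simp only [Real.sqrt_sq (norm_nonneg _)] at h
  convert h using 1
  ext w
  simp [field]

theorem hasDerivAt_integral_mul (hu : ContinuousOn u (Ioi 0)) {r : ℝ} (hr : 0 < r) :
    HasDerivAt (fun x => ∫ s in (1:ℝ)..x, s * u s) (r * u r) r := by
  have hg : ContinuousOn (fun s => s * u s) (Ioi 0) := continuousOn_id.mul hu
  refine intervalIntegral.integral_hasDerivAt_right ?_
    (hg.stronglyMeasurableAtFilter isOpen_Ioi r hr) (hg.continuousAt (Ioi_mem_nhds hr))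
  exact (hg.mono fun s hs => (lt_min one_pos hr).trans_le hs.1).intervalIntegrable

theorem contDiffOn_integral_mul (hu : ContDiffOn ℝ 1 u (Ioi 0)) :
    ContDiffOn ℝ 2 (fun x => ∫ s in (1:ℝ)..x, s * u s) (Ioi 0) := by
  rw [show (2 : WithTop ℕ∞) = 1 + 1 by norm_num, contDiffOn_succ_iff_deriv_of_isOpen isOpen_Ioi]
  refine ⟨fun x hx => (hasDerivAt_integral_mul hu.continuousOn hx).differentiableAt
    |>.differentiableWithinAt, by simp, ?_⟩
  exact (contDiffOn_id.mul hu).congr fun x hx =>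
    (hasDerivAt_integral_mul hu.continuousOn hx).deriv

theorem hasFDerivAt_integral_norm (hu : ContinuousOn u (Ioi 0)) {a : E} (ha : a ≠ 0) :
    HasFDerivAt (fun x : E => ∫ s in (1:ℝ)..‖x‖, s * u s) (u ‖a‖ • innerSL ℝ a) a := by
  have ha' : 0 < ‖a‖ := norm_pos_iff.mpr ha
  refine ((hasDerivAt_integral_mul hu ha').comp_hasFDerivAt a
    (hasFDerivAt_norm_of_ne_zero ha)).congr_fderiv ?_
  rw [smul_smul, mul_right_comm, mul_inv_cancel₀ ha'.ne', one_mul]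

theorem hasDerivAt_mul_inner_add_smul {a : E} (hu : DifferentiableAt ℝ u ‖a‖) (ha : a ≠ 0)
    (w : E) :
    HasDerivAt (fun t : ℝ => u ‖a + t • w‖ * ⟪a + t • w, w⟫)
      (deriv u ‖a‖ * (⟪a, w⟫ ^ 2 / ‖a‖) + u ‖a‖ * ‖w‖ ^ 2) 0 := by
  have hline : HasDerivAt (fun t : ℝ => a + t • w) w 0 := by
    simpa using ((hasDerivAt_id (0 : ℝ)).smul_const w).const_add a
  have hnorm : HasDerivAt (fun t : ℝ => ‖a + t • w‖) (‖a‖⁻¹ * ⟪a, w⟫) 0 := by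
    have hn : HasFDerivAt (‖·‖) (‖a‖⁻¹ • innerSL ℝ a) (a + (0 : ℝ) • w) := by
      rw [zero_smul, add_zero]; exact hasFDerivAt_norm_of_ne_zero ha
    simpa [Function.comp_def] using hn.comp_hasDerivAt (0 : ℝ) hline
  have hu' : HasDerivAt u (deriv u ‖a‖) ‖a + (0 : ℝ) • w‖ := by
    simpa using hu.hasDerivAt
  have hinner : HasDerivAt (fun t : ℝ => ⟪a + t • w, w⟫) (‖w‖ ^ 2) 0 := by
    simpa [real_inner_self_eq_norm_sq] using hline.inner ℝ (hasDerivAt_const (0 : ℝ) w)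
  refine ((hu'.comp (0 : ℝ) hnorm).mul hinner).congr_deriv ?_
  simp only [Function.comp_apply, zero_smul, add_zero]
  field_simp

end EdgeCalculus

theorem sum_sum_inner_sub_eq_two_mul {E ι : Type*} [NormedAddCommGroup E]
    [InnerProductSpace ℝ E] [Fintype ι] {F : ι → ι → E} (hF : ∀ i j, F j i = -F i j) (v : ι → E) :
    ∑ i, ∑ j, ⟪F i j, v i - v j⟫ = 2 * ∑ i, ∑ j, ⟪F i j, v i⟫ := by
  have hswap : ∑ i, ∑ j, ⟪F i j, v j⟫ = -∑ i, ∑ j, ⟪F i j, v i⟫ := by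
    rw [Finset.sum_comm]
    simp only [← Finset.sum_neg_distrib, ← inner_neg_left, ← hF]
  simp only [inner_sub_right, Finset.sum_sub_distrib, hswap]
  ring

theorem fderiv_fderiv_apply_eq_of_hasDerivAt {F : Type*} [NormedAddCommGroup F]
    [NormedSpace ℝ F] {Φ : F → ℝ} {p v : F} {g : ℝ → ℝ} {c : ℝ} (hΦ : ContDiffAt ℝ 2 Φ p)
    (hg : ∀ᶠ t in 𝓝 (0 : ℝ), fderiv ℝ Φ (p + t • v) v = g t) (hc : HasDerivAt g c 0) :
    fderiv ℝ (fderiv ℝ Φ) p v v = c := by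
  have hD : HasFDerivAt (fderiv ℝ Φ) (fderiv ℝ (fderiv ℝ Φ) p) (p + (0 : ℝ) • v) := by
    rw [zero_smul, add_zero]
    exact ((hΦ.fderiv_right (m := 1) (by norm_num)).differentiableAt one_ne_zero).hasFDerivAt
  have hline : HasDerivAt (fun t : ℝ => p + t • v) v 0 := by
    simpa using ((hasDerivAt_id (0 : ℝ)).smul_const v).const_add p
  exact ((ContinuousLinearMap.apply ℝ ℝ v).hasFDerivAt.comp_hasDerivAt 0
    (hD.comp_hasDerivAt 0 hline)).unique (hc.congr_of_eventuallyEq hg)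

section Configurations

variable {ι : Type*} [Fintype ι]

noncomputable def ptCLM (ι : Type*) [Fintype ι] (i : ι) : Conf ι →L[ℝ] Pt :=
  LinearMap.toContinuousLinearMap
    { toFun := fun p => pt p i
      map_add' := fun _ _ => rfl
      map_smul' := fun _ _ => rfl }

@[simp] theorem ptCLM_apply (i : ι) (p : Conf ι) : ptCLM ι i p = pt p i := rfl

theorem pt_add_smul_sub_pt (p v : Conf ι) (t : ℝ) (i j : ι) :
    pt (p + t • v) i - pt (p + t • v) j = (pt p i - pt p j) + t • (pt v i - pt v j) := by
  simp only [← ptCLM_apply, map_add, map_smul]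
  module

theorem inner_eq_sum_inner_pt (p q : Conf ι) : ⟪p, q⟫ = ∑ i, ⟪pt p i, pt q i⟫ := by
  simp [PiLp.inner_apply, Fintype.sum_prod_type, pt]

theorem isOpen_configSpace (G : SimpleGraph ι) : IsOpen (configSpace G) := by
  simp only [configSpace, Set.ofPred_forall]
  exact isOpen_iInter_of_finite fun i => isOpen_iInter_of_finite fun j =>
    isOpen_iInter_of_finite fun _ =>
      isOpen_ne_fun (ptCLM ι i).continuous (ptCLM ι j).continuous

theorem contDiffAt_potential {G : SimpleGraph ι} {f : ι → ι → ℝ → ℝ}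
    (hf : ∀ i j, G.Adj i j → ContDiffOn ℝ 1 (f i j) (Ioi 0))
    {p : Conf ι} (hp : p ∈ configSpace G) : ContDiffAt ℝ 2 (potential G f) p := by
  refine contDiffAt_const.mul (ContDiffAt.sum fun i _ => ContDiffAt.sum fun j _ => ?_)
  split_ifs with h
  · have hdist : ContDiffAt ℝ 2 (fun q : Conf ι => dist (pt q i) (pt q j)) p :=
      (ptCLM ι i).contDiff.contDiffAt.dist ℝ (ptCLM ι j).contDiff.contDiffAt (hp i j h)
    exact ((contDiffOn_integral_mul (hf i j h)).contDiffAt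
      (Ioi_mem_nhds (dist_pos.mpr (hp i j h)))).comp p hdist
  · exact contDiffAt_const

open Classical in
theorem pt_formationField (G : SimpleGraph ι) (f : ι → ι → ℝ → ℝ) (q : Conf ι) (i : ι) :
    pt (formationField G f q) i =
      ∑ j, if G.Adj i j then f i j (dist (pt q i) (pt q j)) • (pt q j - pt q i) else 0 := by
  ext c
  simp only [pt, formationField, PiLp.toLp_apply, WithLp.ofLp_sum, Finset.sum_apply]
  refine Finset.sum_congr rfl fun j _ => ?_
  split_ifs <;> simp

open Classical in
theorem inner_formationField {G : SimpleGraph ι} {f : ι → ι → ℝ → ℝ}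
    (hfsymm : ∀ i j, f i j = f j i) (q v : Conf ι) :
    ⟪formationField G f q, v⟫ = -(1 / 2 * ∑ i, ∑ j, if G.Adj i j then
      f i j (dist (pt q i) (pt q j)) * ⟪pt q i - pt q j, pt v i - pt v j⟫ else 0) := by
  set F : ι → ι → Pt := fun i j =>
    if G.Adj i j then f i j (dist (pt q i) (pt q j)) • (pt q j - pt q i) else 0
  have hF : ∀ i j, F j i = -F i j := by
    intro i j
    simp only [F, G.adj_comm j i, hfsymm j i, dist_comm (pt q j)]
    split_ifs <;> simp [← smul_neg]
  have hrhs : ∀ i j, (if G.Adj i j then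
      f i j (dist (pt q i) (pt q j)) * ⟪pt q i - pt q j, pt v i - pt v j⟫ else 0) =
      -⟪F i j, pt v i - pt v j⟫ := by
    intro i j
    simp only [F]
    split_ifs
    · rw [← neg_sub (pt q i), smul_neg, inner_neg_left, neg_neg, real_inner_smul_left]
    · simp
  simp only [hrhs, Finset.sum_neg_distrib, sum_sum_inner_sub_eq_two_mul hF,
    inner_eq_sum_inner_pt, pt_formationField, sum_inner]
  ring

theorem hasGradientAt_potential {G : SimpleGraph ι} {f : ι → ι → ℝ → ℝ}
    (hf : ∀ i j, G.Adj i j → ContinuousOn (f i j) (Ioi 0)) (hfsymm : ∀ i j, f i j = f j i)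
    {q : Conf ι} (hq : q ∈ configSpace G) :
    HasGradientAt (potential G f) (-formationField G f q) q := by
  classical
  rw [hasGradientAt_iff_hasFDerivAt]
  have hterm : ∀ i j, HasFDerivAt
      (fun q : Conf ι => if G.Adj i j then ∫ s in (1 : ℝ)..dist (pt q i) (pt q j), s * f i j s
        else 0)
      (if G.Adj i j then f i j (dist (pt q i) (pt q j)) •
        (innerSL ℝ (pt q i - pt q j)).comp (ptCLM ι i - ptCLM ι j) else 0) q := by
    intro i j
    split_ifs with h
    · simp only [dist_eq_norm]
      exact (hasFDerivAt_integral_norm (hf i j h) (sub_ne_zero.mpr (hq i j h))).comp q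
        (ptCLM ι i - ptCLM ι j).hasFDerivAt
    · exact hasFDerivAt_const _ _
  refine ((HasFDerivAt.fun_sum fun i _ => HasFDerivAt.fun_sum fun j _ => hterm i j).const_mul
    (1 / 2)).congr_fderiv ?_
  ext v
  rw [InnerProductSpace.toDual_apply_apply, inner_neg_left, inner_formationField hfsymm, neg_neg]
  simp only [smul_apply, FunLike.coe_sum, Finset.sum_apply,
    apply_ite (fun L : Conf ι →L[ℝ] ℝ => L v), ContinuousLinearMap.comp_apply,
    innerSL_apply_apply, sub_apply, ptCLM_apply, smul_eq_mul, zero_apply]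

end Configurations

section Hessian

variable {ι : Type*} [Fintype ι]

open Classical in
theorem fderiv_fderiv_potential_apply_self {G : SimpleGraph ι} {f : ι → ι → ℝ → ℝ}
    (hf : ∀ i j, G.Adj i j → ContDiffOn ℝ 1 (f i j) (Ioi 0)) (hfsymm : ∀ i j, f i j = f j i)
    {p : Conf ι} (hp : p ∈ configSpace G) (v : Conf ι) :
    fderiv ℝ (fderiv ℝ (potential G f)) p v v = 1 / 2 * ∑ i, ∑ j, if G.Adj i j then
      deriv (f i j) (dist (pt p i) (pt p j)) *
          (⟪pt p i - pt p j, pt v i - pt v j⟫ ^ 2 / dist (pt p i) (pt p j)) +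
        f i j (dist (pt p i) (pt p j)) * ‖pt v i - pt v j‖ ^ 2 else 0 := by
  refine fderiv_fderiv_apply_eq_of_hasDerivAt (contDiffAt_potential hf hp) (g := fun t =>
    1 / 2 * ∑ i, ∑ j, if G.Adj i j then f i j ‖(pt p i - pt p j) + t • (pt v i - pt v j)‖ *
      ⟪(pt p i - pt p j) + t • (pt v i - pt v j), pt v i - pt v j⟫ else 0) ?_ ?_
  · have hmem : ∀ᶠ t : ℝ in 𝓝 0, p + t • v ∈ configSpace G := by
      refine ContinuousAt.preimage_mem_nhds (by fun_prop) ?_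
      rw [zero_smul, add_zero]
      exact (isOpen_configSpace G).mem_nhds hp
    filter_upwards [hmem] with t ht
    rw [(hasGradientAt_potential (fun i j h => (hf i j h).continuousOn) hfsymm
      ht).hasFDerivAt.fderiv, InnerProductSpace.toDual_apply_apply, inner_neg_left,
      inner_formationField hfsymm, neg_neg]
    simp only [dist_eq_norm, pt_add_smul_sub_pt]
  · refine HasDerivAt.const_mul _
      (HasDerivAt.fun_sum fun i _ => HasDerivAt.fun_sum fun j _ => ?_)
    split_ifs with h
    · have ha : pt p i - pt p j ≠ 0 := sub_ne_zero.mpr (hp i j h)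
      have hd : DifferentiableAt ℝ (f i j) ‖pt p i - pt p j‖ :=
        ((hf i j h).contDiffAt (Ioi_mem_nhds (norm_pos_iff.mpr ha))).differentiableAt
          one_ne_zero
      rw [dist_eq_norm]
      exact hasDerivAt_mul_inner_add_smul hd ha _
    · exact hasDerivAt_const _ _

end Hessian

section HessianMatrix

open scoped Matrix

variable {ι : Type*} [Fintype ι] [DecidableEq ι]

theorem hessianMat_apply (Φ : Conf ι → ℝ) (p : Conf ι) (a b : ι × Fin 2) :
    hessianMat Φ p a b = fderiv ℝ (fderiv ℝ Φ) p (EuclideanSpace.single a 1)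
      (EuclideanSpace.single b 1) := by
  simp [hessianMat, iteratedFDeriv_two_apply]

theorem dotProduct_hessianMat_mulVec (Φ : Conf ι → ℝ) (p : Conf ι) (x : ι × Fin 2 → ℝ) :
    x ⬝ᵥ (hessianMat Φ p *ᵥ x) =
      fderiv ℝ (fderiv ℝ Φ) p (WithLp.toLp 2 x) (WithLp.toLp 2 x) := by
  have hx : WithLp.toLp 2 x = ∑ a, x a • EuclideanSpace.single a (1 : ℝ) := by
    simpa [EuclideanSpace.basisFun_apply] using
      ((EuclideanSpace.basisFun _ ℝ).sum_repr (WithLp.toLp 2 x)).symm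
  rw [hx]
  simp only [map_sum, map_smul, FunLike.coe_sum, Finset.sum_apply, smul_apply, smul_eq_mul]
  simp only [dotProduct, Matrix.mulVec, hessianMat_apply, Finset.mul_sum]
  conv_rhs => rw [Finset.sum_comm]
  exact Finset.sum_congr rfl fun a _ => Finset.sum_congr rfl fun b _ => by ring

theorem posSemidef_hessianMat {Φ : Conf ι → ℝ} {p : Conf ι} (hΦ : ContDiffAt ℝ 2 Φ p)
    (hnn : ∀ v, 0 ≤ fderiv ℝ (fderiv ℝ Φ) p v v) : (hessianMat Φ p).PosSemidef := by
  refine Matrix.posSemidef_iff_dotProduct_mulVec.mpr ⟨?_, fun x => ?_⟩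
  · ext a b
    simp only [Matrix.conjTranspose_apply, star_trivial, hessianMat_apply]
    exact hΦ.isSymmSndFDerivAt (by simp [minSmoothness_of_isRCLikeNormedField]) _ _
  · rw [star_trivial, dotProduct_hessianMat_mulVec]
    exact hnn _

end HessianMatrix

section Signature

variable {m : Type*} [Fintype m] [DecidableEq m] {A : Matrix m m ℝ}

theorem nNeg_eq_zero_of_posSemidef (hA : A.PosSemidef) : nNeg A = 0 := by
  have hcard : nNeg A = Fintype.card {i // hA.1.eigenvalues i < 0} := by
    simp only [nNeg, dif_pos hA.1]
    congr!
  rw [hcard, Fintype.card_eq_zero_iff]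
  exact ⟨fun i => (hA.eigenvalues_nonneg i).not_gt i.2⟩

theorem nPos_add_nZero_of_posSemidef (hA : A.PosSemidef) :
    nPos A + nZero A = Fintype.card m := by
  have hpos : nPos A = Fintype.card {i // 0 < hA.1.eigenvalues i} := by
    simp only [nPos, dif_pos hA.1]
    congr!
  have hzero : nZero A = Fintype.card {i // hA.1.eigenvalues i = 0} := by
    simp only [nZero, dif_pos hA.1]
    congr!
  simp only [hpos, hzero, Fintype.card_subtype, (hA.eigenvalues_nonneg _).lt_iff_ne', ne_eq]
  rw [add_comm, Finset.card_filter_add_card_filter_not, Finset.card_univ]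

end Signature

open Classical in
def IsEquilibriumStress {ι E : Type*} [Fintype ι] [AddCommGroup E] [Module ℝ E]
    (G : SimpleGraph ι) (x : ι → E) (w : ι → ι → ℝ) : Prop :=
  ∀ i, ∑ j, (if G.Adj i j then w i j • (x j - x i) else 0) = 0

namespace Henneberg

variable {ι : Type*} {G : SimpleGraph ι} (H : Henneberg G)

theorem adj_par1 {l : Fin (Nat.card ι)} (hl : 2 ≤ (l : ℕ)) :
    G.Adj (H.ord l) (H.ord (H.par1 l)) :=
  ((H.edge_iff _ _).mpr (Or.inr ⟨l, hl, Or.inl rfl⟩)).symm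

theorem adj_par2 {l : Fin (Nat.card ι)} (hl : 2 ≤ (l : ℕ)) :
    G.Adj (H.ord l) (H.ord (H.par2 l)) :=
  ((H.edge_iff _ _).mpr (Or.inr ⟨l, hl, Or.inr rfl⟩)).symm

theorem eq_par_of_adj_of_lt {l m : Fin (Nat.card ι)} (hadj : G.Adj (H.ord l) (H.ord m))
    (hml : m < l) :
    (2 ≤ (l : ℕ) ∧ (m = H.par1 l ∨ m = H.par2 l)) ∨ ((l : ℕ) = 1 ∧ (m : ℕ) = 0) := by
  rcases (H.edge_iff _ _).mp hadj with h | ⟨l', hl', h | h⟩ <;>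
    rcases Sym2.eq_iff.mp h with ⟨hl, hm⟩ | ⟨hl, hm⟩ <;>
    obtain rfl := H.ord.injective hl <;> obtain rfl := H.ord.injective hm
  · exact absurd hml (by simp [Fin.lt_def])
  · exact Or.inr ⟨rfl, rfl⟩
  · exact absurd (H.par1_lt m hl') hml.not_gt
  · exact Or.inl ⟨hl', Or.inl rfl⟩
  · exact absurd (H.par2_lt m hl') hml.not_gt
  · exact Or.inl ⟨hl', Or.inr rfl⟩

end Henneberg

section Stress

variable {ι E : Type*} [Fintype ι] [AddCommGroup E] [Module ℝ E] {G : SimpleGraph ι}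
  {x : ι → E} {w : ι → ι → ℝ}

open Classical in
theorem IsEquilibriumStress.sum_ord_eq_zero (hw : IsEquilibriumStress G x w) (H : Henneberg G)
    (l : Fin (Nat.card ι)) :
    ∑ m, (if G.Adj (H.ord l) (H.ord m) then
      w (H.ord l) (H.ord m) • (x (H.ord m) - x (H.ord l)) else 0) = 0 :=
  (H.ord.sum_comp fun j => if G.Adj (H.ord l) j then w (H.ord l) j • (x j - x (H.ord l))
    else 0).trans (hw _)

theorem Henneberg.stress_eq_zero_of_lt (H : Henneberg G) (hw : IsEquilibriumStress G x w)
    (hx : ∀ i j, G.Adj i j → x i ≠ x j)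
    (htri : ∀ i j k, Is3Cycle G i j k → LinearIndependent ℝ ![x j - x i, x k - x i])
    {l : Fin (Nat.card ι)}
    (hlater : ∀ m, l < m → G.Adj (H.ord l) (H.ord m) → w (H.ord l) (H.ord m) = 0)
    {m : Fin (Nat.card ι)} (hml : m < l) (hadj : G.Adj (H.ord l) (H.ord m)) :
    w (H.ord l) (H.ord m) = 0 := by
  classical
  set T : Fin (Nat.card ι) → E := fun m => if G.Adj (H.ord l) (H.ord m) then
    w (H.ord l) (H.ord m) • (x (H.ord m) - x (H.ord l)) else 0
  have hsum : ∑ m, T m = 0 := hw.sum_ord_eq_zero H l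
  have hT : ∀ c, (c < l → ¬G.Adj (H.ord l) (H.ord c)) → T c = 0 := by
    intro c hc
    simp only [T]
    split_ifs with h
    · rcases lt_trichotomy c l with hcl | rfl | hlc
      · exact absurd h (hc hcl)
      · exact absurd h G.irrefl
      · rw [hlater c hlc h, zero_smul]
    · rfl
  rcases H.eq_par_of_adj_of_lt hadj hml with ⟨hl2, hm⟩ | ⟨hl1, hm0⟩
  · have hadj1 := H.adj_par1 hl2
    have hadj2 := H.adj_par2 hl2
    rw [Fintype.sum_eq_add _ _ (H.par_ne l hl2) fun c hc => hT c fun hcl h => ?_] at hsum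
    · simp only [T, if_pos hadj1, if_pos hadj2] at hsum
      have h0 := LinearIndependent.pair_iff.mp
        (htri _ _ _ ⟨hadj1, hadj2, H.par_adj l hl2⟩) _ _ hsum
      rcases hm with rfl | rfl
      exacts [h0.1, h0.2]
    · rcases H.eq_par_of_adj_of_lt h hcl with ⟨_, hc'⟩ | ⟨hl1, _⟩
      · exact hc'.elim hc.1 hc.2
      · omega
  · rw [Fintype.sum_eq_single m fun c hc => hT c fun hcl _ =>
      hc (Fin.ext (by have := Fin.lt_def.mp hcl; omega))] at hsum
    simp only [T, if_pos hadj] at hsum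
    exact (smul_eq_zero.mp hsum).resolve_right (sub_ne_zero.mpr (hx _ _ hadj.symm))

theorem Henneberg.stress_eq_zero (H : Henneberg G) (hw : IsEquilibriumStress G x w)
    (hsymm : ∀ i j, w i j = w j i) (hx : ∀ i j, G.Adj i j → x i ≠ x j)
    (htri : ∀ i j k, Is3Cycle G i j k → LinearIndependent ℝ ![x j - x i, x k - x i])
    {i j : ι} (h : G.Adj i j) : w i j = 0 := by
  have hearlier : ∀ l m, m < l → G.Adj (H.ord l) (H.ord m) → w (H.ord l) (H.ord m) = 0 := by
    intro l
    induction l using WellFoundedGT.induction with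
    | _ l ih =>
      exact fun m => H.stress_eq_zero_of_lt hw hx htri fun m hlm hadj => by
        rw [hsymm]; exact ih m hlm l hlm hadj.symm
  obtain ⟨l, rfl⟩ := H.ord.surjective i
  obtain ⟨m, rfl⟩ := H.ord.surjective j
  rcases lt_trichotomy m l with hml | rfl | hlm
  · exact hearlier l m hml h
  · exact absurd h G.irrefl
  · rw [hsymm]; exact hearlier m l hlm h.symm

end Stress

theorem IsTriangulatedLaman.stress_eq_zero {ι E : Type*} [Fintype ι] [AddCommGroup E]
    [Module ℝ E] {G : SimpleGraph ι} {x : ι → E} {w : ι → ι → ℝ} (hG : IsTriangulatedLaman G)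
    (hw : IsEquilibriumStress G x w) (hsymm : ∀ i j, w i j = w j i)
    (hx : ∀ i j, G.Adj i j → x i ≠ x j)
    (htri : ∀ i j k, Is3Cycle G i j k → LinearIndependent ℝ ![x j - x i, x k - x i])
    {i j : ι} (h : G.Adj i j) : w i j = 0 := by
  rcases hG with hcard | ⟨⟨H⟩⟩
  · have : Subsingleton ι := Finite.card_le_one_iff_subsingleton.mp hcard
    exact absurd (Subsingleton.elim i j) h.ne
  · exact H.stress_eq_zero hw hsymm hx htri h

theorem isEquilibriumStress_of_formationField_eq_zero {ι : Type*} [Fintype ι]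
    {G : SimpleGraph ι} {f : ι → ι → ℝ → ℝ} {q : Conf ι} (h : formationField G f q = 0) :
    IsEquilibriumStress G (pt q) fun i j => f i j (dist (pt q i) (pt q j)) := fun i => by
  rw [← pt_formationField, h]
  rfl

theorem IsMonoAttRep.deriv_pos_of_eq_zero {u : ℝ → ℝ} (hu : IsMonoAttRep u) {r : ℝ}
    (hr : 0 < r) (h0 : u r = 0) : 0 < deriv u r := by
  have hd : DifferentiableAt ℝ u r :=
    (hu.contDiff.contDiffAt (Ioi_mem_nhds hr)).differentiableAt one_ne_zero
  have h := hu.deriv_pos r hr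
  rw [deriv_fun_mul (c := fun y => y) differentiableAt_fun_id hd, h0, deriv_id'', one_mul,
    zero_add] at h
  exact pos_of_mul_pos_right h hr.le

theorem posSemidef_hessianMat_potential {ι : Type*} [Fintype ι] [DecidableEq ι]
    {G : SimpleGraph ι} {f : ι → ι → ℝ → ℝ}
    (hf : ∀ i j, G.Adj i j → ContDiffOn ℝ 1 (f i j) (Ioi 0)) (hfsymm : ∀ i j, f i j = f j i)
    {p : Conf ι} (hp : p ∈ configSpace G)
    (hzero : ∀ i j, G.Adj i j → f i j (dist (pt p i) (pt p j)) = 0)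
    (hderiv : ∀ i j, G.Adj i j → 0 ≤ deriv (f i j) (dist (pt p i) (pt p j))) :
    (hessianMat (potential G f) p).PosSemidef := by
  refine posSemidef_hessianMat (contDiffAt_potential hf hp) fun v => ?_
  rw [fderiv_fderiv_potential_apply_self hf hfsymm hp]
  refine mul_nonneg (by norm_num)
    (Finset.sum_nonneg fun i _ => Finset.sum_nonneg fun j _ => ?_)
  split_ifs with h
  · rw [hzero i j h, zero_mul, add_zero]
    exact mul_nonneg (hderiv i j h) (by positivity)
  · rfl

/-- Corollary 4.5 of the paper. For a triangulated formation system, if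
`p` is a critical point of the potential `Φ` and `(G, p)` is strongly rigid, then the
critical orbit `O_p` is exponentially stable — the signature of the Hessian `H_p` is
`(2n - 3, 0, 3)` — and `‖x_i - x_j‖ = d̄_{ij}` for every edge `(i, j)` of `G`. -/
theorem stmt18 {ι : Type*} [Fintype ι] [DecidableEq ι] (n : ℕ)
    (hcard : Fintype.card ι = n) (G : SimpleGraph ι) (f : ι → ι → ℝ → ℝ)
    (dbar : ι → ι → ℝ) (hsys : IsTriFormation G f dbar)
    (p : Conf ι) (hp : p ∈ configSpace G)
    (hcrit : gradient (potential G f) p = 0) (hsr : StronglyRigid G p) :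
    nPos (hessianMat (potential G f) p) = 2 * n - 3 ∧
    nNeg (hessianMat (potential G f) p) = 0 ∧
    nZero (hessianMat (potential G f) p) = 3 ∧
    ∀ i j : ι, G.Adj i j → dist (pt p i) (pt p j) = dbar i j := by
  have hf i j (h : G.Adj i j) : ContDiffOn ℝ 1 (f i j) (Ioi 0) := (hsys.mono i j h).contDiff
  have hdpos i j (h : G.Adj i j) : 0 < dist (pt p i) (pt p j) := dist_pos.mpr (hp i j h)
  have hforce : formationField G f p = 0 := by
    rw [← neg_eq_zero, ← hcrit, (hasGradientAt_potential (fun i j h => (hf i j h).continuousOn)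
      hsys.fsymm hp).gradient]
  have hzero i j (h : G.Adj i j) : f i j (dist (pt p i) (pt p j)) = 0 :=
    hsys.laman.stress_eq_zero (isEquilibriumStress_of_formationField_eq_zero hforce)
      (fun i j => by rw [hsys.fsymm, dist_comm]) hp hsr h
  have hpsd : (hessianMat (potential G f) p).PosSemidef :=
    posSemidef_hessianMat_potential hf hsys.fsymm hp hzero fun i j h =>
      ((hsys.mono i j h).deriv_pos_of_eq_zero (hdpos i j h) (hzero i j h)).le
  have hker : nZero (hessianMat (potential G f) p) = 3 := hsys.morse.2 p hp hcrit
  have hsum := nPos_add_nZero_of_posSemidef hpsd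
  rw [Fintype.card_prod, hcard, Fintype.card_fin, hker] at hsum
  refine ⟨by omega, nNeg_eq_zero_of_posSemidef hpsd, hker, fun i j h => ?_⟩
  exact (hsys.mono i j h).unique_zero.unique ⟨hdpos i j h, hzero i j h⟩
    ⟨hsys.dpos i j h, hsys.fzero i j h⟩
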